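/- arXiv:math/0308024 — 2 statements merged into one kernel-verified Lean document; each statement's English description precedes it below -/
import Mathlib

section
/- The principal specialization of the Schur function satisfies s_ρ(1, q, q², ...) = q^{n(ρ)} / ∏_{e ∈ ρ} (1 - q^{h(e)}), where n(ρ) = Σᵢ(i-1)ρᵢ and h(e) are hook lengths. -/
open Finset PowerSeries

/-- The `j`-th part (0-indexed) of the conjugate partition. -/
def conjP (l : ℕ) (ν : ℕ → ℕ) (j : ℕ) : ℕ :=
  ((Finset.range l).filter (fun i => j < ν i)).card

/-- The hook length at the cell in row `i`, column `j` (0-indexed). -/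
def hookN (l : ℕ) (ν : ℕ → ℕ) (i j : ℕ) : ℕ :=
  ν i + conjP l ν j - (i + j + 1)

/-- The principal specialization `h_m(1, q, q², …) = 1/((1-q)⋯(1-q^m))` of the
complete homogeneous symmetric function (`0` for `m < 0`), as a power series in `q`. -/
noncomputable def hSpec (m : ℤ) : PowerSeries ℚ :=
  if m < 0 then 0
  else (∏ k ∈ Finset.range m.toNat, (1 - (X : PowerSeries ℚ) ^ (k + 1)))⁻¹

namespace SchurSpecAux

noncomputable abbrev qq : PowerSeries ℚ := PowerSeries.X

noncomputable def phi (m : ℕ) : PowerSeries ℚ := ∏ k ∈ Finset.range m, (1 - qq ^ (k + 1))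

def mu (l : ℕ) (ν : ℕ → ℕ) (a : ℕ) : ℕ := ν a + (l - 1 - a)

lemma constantCoeff_phi (m : ℕ) : constantCoeff (phi m) = 1 := by
  rw [phi, map_prod]
  refine Finset.prod_eq_one fun k _ => ?_
  simp [zero_pow]

lemma phi_ne_zero (m : ℕ) : phi m ≠ 0 := by
  intro h
  have := constantCoeff_phi m
  rw [h, map_zero] at this
  exact zero_ne_one this

lemma phi_mul_inv (m : ℕ) : phi m * (phi m)⁻¹ = 1 :=
  PowerSeries.mul_inv_cancel _ (by rw [constantCoeff_phi]; exact one_ne_zero)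

lemma hSpec_coe (m : ℕ) : hSpec (m : ℤ) = (phi m)⁻¹ := by
  simp [hSpec, phi]

lemma hSpec_neg {m : ℤ} (h : m < 0) : hSpec m = 0 := by
  simp [hSpec, h]

lemma key_entry (l : ℕ) (ν : ℕ → ℕ) (a t : ℕ) :
    phi (mu l ν a) * hSpec ((mu l ν a : ℤ) - t) * qq ^ (∑ k ∈ range t, k)
      = ∏ k ∈ range t, (qq ^ k - qq ^ (mu l ν a)) := by
  set M := mu l ν a with hM
  rcases le_or_gt t M with h | h
  · have h1 : ((M : ℤ) - t) = ((M - t : ℕ) : ℤ) := by omega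
    rw [h1, hSpec_coe]
    set m := M - t with hm
    have h2 : phi m * (∏ k ∈ Ico m M, (1 - qq ^ (k + 1))) = phi M :=
      prod_range_mul_prod_Ico _ (by omega)
    have h4 : phi M * (phi m)⁻¹ = ∏ k ∈ Ico m M, (1 - qq ^ (k + 1)) := by
      rw [← h2, mul_comm (phi m), mul_assoc, phi_mul_inv, mul_one]
    rw [h4, prod_Ico_eq_prod_range]
    have ht : M - m = t := by omega
    rw [ht]
    rw [← prod_range_reflect (fun k => qq ^ k - qq ^ M) t]
    have hpow : (qq : PowerSeries ℚ) ^ (∑ k ∈ range t, k) = ∏ k ∈ range t, qq ^ (t - 1 - k) := by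
      rw [prod_range_reflect (fun k => qq ^ k) t, prod_pow_eq_pow_sum]
    rw [hpow, ← prod_mul_distrib]
    refine prod_congr rfl fun j hj => ?_
    simp only [mem_range] at hj
    have hq : qq ^ (t - 1 - j) * qq ^ (m + j + 1) = qq ^ M := by
      rw [← pow_add]; congr 1; omega
    rw [sub_mul, one_mul, mul_comm (qq ^ (m + j + 1))  (qq ^ (t - 1 - j)), hq]
  · have hneg : ((M : ℤ) - t) < 0 := by omega
    rw [hSpec_neg hneg, mul_zero, zero_mul]
    symm
    apply prod_eq_zero (mem_range.mpr h)
    simp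

lemma sum_tri (l : ℕ) : ∑ b ∈ range l, (l - 1 - b) * b = ∑ j ∈ range l, ∑ k ∈ range j, k := by
  induction l with
  | zero => simp
  | succ m ih =>
    rw [sum_range_succ (f := fun j => ∑ k ∈ range j, k), ← ih, sum_range_succ]
    have h1 : ∀ b ∈ range m, (m + 1 - 1 - b) * b = (m - 1 - b) * b + b := by
      intro b hb
      simp only [mem_range] at hb
      have h2 : m + 1 - 1 - b = (m - 1 - b) + 1 := by omega
      rw [h2, add_mul, one_mul]
    rw [sum_congr rfl h1, sum_add_distrib]
    simp


lemma prod_rev_pairs {M : Type*} [CommMonoid M] (l : ℕ) (F : ℕ → ℕ → M) :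
    (∏ i : Fin l, ∏ j ∈ Finset.Ioi i, F ((Fin.rev j : Fin l) : ℕ) ((Fin.rev i : Fin l) : ℕ))
      = ∏ a ∈ range l, ∏ b ∈ Ico (a + 1) l, F a b := by
  have h1 : ∀ (i : Fin l),
      (∏ j ∈ Finset.Ioi i, F ((Fin.rev j : Fin l) : ℕ) ((Fin.rev i : Fin l) : ℕ))
        = ∏ j ∈ Finset.Iio (Fin.rev i), F (j : ℕ) ((Fin.rev i : Fin l) : ℕ) := by
    intro i
    refine Finset.prod_nbij' (fun j => Fin.rev j) (fun j => Fin.rev j) ?_ ?_ ?_ ?_ ?_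
    · intro a ha
      simp only [Finset.mem_Ioi] at ha
      simp only [Finset.mem_Iio]
      exact Fin.rev_lt_rev.mpr ha
    · intro a ha
      simp only [Finset.mem_Iio] at ha
      simp only [Finset.mem_Ioi]
      have := Fin.rev_lt_rev.mpr ha
      rwa [Fin.rev_rev] at this
    · intro a _; exact Fin.rev_rev a
    · intro a _; exact Fin.rev_rev a
    · intro a _; rfl
  calc (∏ i : Fin l, ∏ j ∈ Finset.Ioi i, F ((Fin.rev j : Fin l) : ℕ) ((Fin.rev i : Fin l) : ℕ))
      = ∏ i : Fin l, ∏ j ∈ Finset.Iio (Fin.rev i), F (j : ℕ) ((Fin.rev i : Fin l) : ℕ) :=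
        Finset.prod_congr rfl fun i _ => h1 i
    _ = ∏ b : Fin l, ∏ j ∈ Finset.Iio b, F (j : ℕ) (b : ℕ) := by
        have := Equiv.prod_comp (Fin.revPerm : Equiv.Perm (Fin l))
          (fun b : Fin l => ∏ j ∈ Finset.Iio b, F (j : ℕ) (b : ℕ))
        simpa using this
    _ = ∏ b : Fin l, ∏ a ∈ Finset.Iio (b : ℕ), F a (b : ℕ) := by
        refine Finset.prod_congr rfl fun b _ => ?_
        rw [← Fin.map_valEmbedding_Iio, Finset.prod_map]
        rfl
    _ = ∏ b ∈ range l, ∏ a ∈ Finset.Iio b, F a b :=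
        Fin.prod_univ_eq_prod_range (fun b => ∏ a ∈ Finset.Iio b, F a b) l
    _ = ∏ a ∈ range l, ∏ b ∈ Ico (a + 1) l, F a b := by
        refine Finset.prod_comm' ?_
        intro x y
        simp only [mem_range, Finset.mem_Iio, Finset.mem_Ico]
        omega

lemma mu_anti (l : ℕ) (ν : ℕ → ℕ) (hanti : ∀ i j, i ≤ j → j < l → ν j ≤ ν i)
    {a b : ℕ} (hab : a < b) (hb : b < l) : mu l ν b < mu l ν a := by
  have h := hanti a b (le_of_lt hab) hb
  show ν b + (l - 1 - b) < ν a + (l - 1 - a)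
  omega


def dcount (l : ℕ) (ν : ℕ → ℕ) (a j : ℕ) : ℕ :=
  ((Finset.Ico (a + 1) l).filter (fun b => ν b ≤ j)).card

def ccount (l : ℕ) (ν : ℕ → ℕ) (a j : ℕ) : ℕ :=
  ((Finset.Ico (a + 1) l).filter (fun b => j < ν b)).card

lemma ccount_add_dcount (l : ℕ) (ν : ℕ → ℕ) (a j : ℕ) (ha : a < l) :
    ccount l ν a j + dcount l ν a j = l - 1 - a := by
  have hu : (Ico (a + 1) l).filter (fun b => j < ν b) ∪
      (Ico (a + 1) l).filter (fun b => ν b ≤ j) = Ico (a + 1) l := by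
    ext b
    simp only [Finset.mem_union, Finset.mem_filter, Finset.mem_Ico]
    omega
  have hdj : Disjoint ((Ico (a + 1) l).filter (fun b => j < ν b))
      ((Ico (a + 1) l).filter (fun b => ν b ≤ j)) := by
    rw [Finset.disjoint_left]
    intro x h1 h2
    simp only [Finset.mem_filter] at h1 h2
    omega
  have hcu := Finset.card_union_of_disjoint hdj
  rw [hu, Nat.card_Ico] at hcu
  unfold ccount dcount
  omega

lemma hook_row (l : ℕ) (ν : ℕ → ℕ)
    (hpos : ∀ i, i < l → 0 < ν i)
    (hanti : ∀ i j, i ≤ j → j < l → ν j ≤ ν i)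
    (a : ℕ) (ha : a < l) :
    (∏ j ∈ range (ν a), (1 - qq ^ (hookN l ν a j))) *
      (∏ b ∈ Ico (a + 1) l, (1 - qq ^ (mu l ν a - mu l ν b))) = phi (mu l ν a) := by
  classical
  have hνa : 0 < ν a := hpos a ha
  have hMdef : mu l ν a = ν a + (l - 1 - a) := rfl
  have hconj : ∀ j, j < ν a → conjP l ν j = (a + 1) + ccount l ν a j := by
    intro j hj
    unfold conjP ccount
    have hsplit : range l = Ico 0 (a + 1) ∪ Ico (a + 1) l := by
      rw [Finset.Ico_union_Ico_eq_Ico (Nat.zero_le _) (by omega), ← Finset.range_eq_Ico]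
    rw [hsplit, Finset.filter_union, Finset.card_union_of_disjoint
      (Finset.disjoint_filter_filter (Finset.Ico_disjoint_Ico_consecutive 0 (a + 1) l))]
    have h1 : (Ico 0 (a + 1)).filter (fun b => j < ν b) = Ico 0 (a + 1) := by
      apply Finset.filter_true_of_mem
      intro b hb
      simp only [Finset.mem_Ico] at hb
      exact lt_of_lt_of_le hj (hanti b a (by omega) ha)
    rw [h1, Nat.card_Ico]
    omega
  have hdle : ∀ j, dcount l ν a j ≤ l - 1 - a := by
    intro j
    have h2 : dcount l ν a j ≤ (Ico (a + 1) l).card :=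
      Finset.card_filter_le (Ico (a + 1) l) (fun b => ν b ≤ j)
    rw [Nat.card_Ico] at h2
    omega
  have hbM : ∀ j, j < ν a → j + dcount l ν a j < mu l ν a := by
    intro j hj
    have := hdle j
    omega
  have hhook : ∀ j, j < ν a → hookN l ν a j + (j + dcount l ν a j) = mu l ν a := by
    intro j hj
    have h1 := hconj j hj
    have h2 := ccount_add_dcount l ν a j ha
    unfold hookN
    rw [h1]
    omega
  have hdmono : ∀ j j', j ≤ j' → dcount l ν a j ≤ dcount l ν a j' := by
    intro j j' h
    exact Finset.card_le_card
      (Finset.monotone_filter_right _ (fun b _ hb => le_trans hb h))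
  have binj : ∀ j j', j + dcount l ν a j = j' + dcount l ν a j' → j = j' := by
    intro j j' h
    rcases lt_trichotomy j j' with hc | hc | hc
    · have := hdmono j j' (le_of_lt hc); omega
    · exact hc
    · have := hdmono j' j (le_of_lt hc); omega
  have hdisj : ∀ j, j < ν a → ∀ b, a + 1 ≤ b → b < l →
      j + dcount l ν a j ≠ mu l ν b := by
    intro j hj b hb1 hb2
    have hmub : mu l ν b = ν b + (l - 1 - b) := rfl
    rcases le_or_gt (ν b) j with hcase | hcase
    · have hsub : Ico b l ⊆ (Ico (a + 1) l).filter (fun b' => ν b' ≤ j) := by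
        intro x hx
        simp only [Finset.mem_Ico, Finset.mem_filter] at hx ⊢
        exact ⟨⟨by omega, hx.2⟩, le_trans (hanti b x hx.1 hx.2) hcase⟩
      have h1 : l - b ≤ dcount l ν a j := by
        have h3 := Finset.card_le_card hsub
        rw [Nat.card_Ico] at h3
        exact h3
      omega
    · have hsub : (Ico (a + 1) l).filter (fun b' => ν b' ≤ j) ⊆ Ico (b + 1) l := by
        intro x hx
        simp only [Finset.mem_Ico, Finset.mem_filter] at hx ⊢
        refine ⟨?_, hx.1.2⟩
        by_contra hxb
        push_neg at hxb
        have := hanti x b (by omega) hb2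
        omega
      have h1 : dcount l ν a j ≤ l - (b + 1) := by
        have h3 := Finset.card_le_card hsub
        rw [Nat.card_Ico] at h3
        exact h3
      omega
  have hmuinj : ∀ x ∈ Ico (a + 1) l, ∀ y ∈ Ico (a + 1) l,
      mu l ν x = mu l ν y → x = y := by
    intro x hx y hy hxy
    simp only [Finset.mem_Ico] at hx hy
    rcases lt_trichotomy x y with hc | hc | hc
    · exfalso; have := mu_anti l ν hanti hc hy.2; omega
    · exact hc
    · exfalso; have := mu_anti l ν hanti hc hx.2; omega
  set S := (range (ν a)).image (fun j => j + dcount l ν a j) with hS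
  set T := (Ico (a + 1) l).image (fun b => mu l ν b) with hT
  have hScard : S.card = ν a := by
    rw [hS, Finset.card_image_of_injective _ (fun j j' => binj j j'), card_range]
  have hTcard : T.card = l - 1 - a := by
    rw [hT, Finset.card_image_of_injOn hmuinj, Nat.card_Ico]
    omega
  have hSsub : S ⊆ range (mu l ν a) := by
    intro x hx
    rw [hS, Finset.mem_image] at hx
    obtain ⟨j, hj, rfl⟩ := hx
    exact mem_range.mpr (hbM j (mem_range.mp hj))
  have hTsub : T ⊆ range (mu l ν a) := by
    intro x hx
    rw [hT, Finset.mem_image] at hx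
    obtain ⟨b, hb, rfl⟩ := hx
    simp only [Finset.mem_Ico] at hb
    exact mem_range.mpr (mu_anti l ν hanti (by omega) hb.2)
  have hdisjST : Disjoint S T := by
    rw [Finset.disjoint_left]
    intro x hxS hxT
    rw [hS, Finset.mem_image] at hxS
    rw [hT, Finset.mem_image] at hxT
    obtain ⟨j, hj, rfl⟩ := hxS
    obtain ⟨b, hb, hbx⟩ := hxT
    simp only [Finset.mem_Ico] at hb
    exact hdisj j (mem_range.mp hj) b hb.1 hb.2 hbx.symm
  have hunion : S ∪ T = range (mu l ν a) := by
    apply Finset.eq_of_subset_of_card_le (Finset.union_subset hSsub hTsub)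
    rw [Finset.card_union_of_disjoint hdisjST, hScard, hTcard, card_range]
    omega
  have hphi : phi (mu l ν a) = ∏ w ∈ range (mu l ν a), (1 - qq ^ (mu l ν a - w)) := by
    rw [phi, ← prod_range_reflect (fun k => 1 - qq ^ (k + 1)) (mu l ν a)]
    refine prod_congr rfl fun w hw => ?_
    simp only [mem_range] at hw
    have h5 : mu l ν a - 1 - w + 1 = mu l ν a - w := by omega
    rw [h5]
  rw [hphi, ← hunion, Finset.prod_union hdisjST]
  congr 1
  · rw [hS, Finset.prod_image (fun x _ y _ h => binj x y h)]
    refine prod_congr rfl fun j hj => ?_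
    simp only [mem_range] at hj
    have h1 := hhook j hj
    have h2 : mu l ν a - (j + dcount l ν a j) = hookN l ν a j := by omega
    rw [h2]
  · rw [hT, Finset.prod_image hmuinj]
end SchurSpecAux

open SchurSpecAux

/-- The principal specialization of the Schur function:
`s_ρ(1, q, q², …) = q^{n(ρ)} / ∏_{e∈ρ} (1 - q^{h(e)})`, where the specialized Schur
function is given by the Jacobi–Trudi determinant `s_ρ = det(h_{ρᵢ - i + j})`
(written cross-multiplied to avoid inverting the hook product). -/
theorem schur_principal_specialization (l : ℕ) (ν : ℕ → ℕ)
    (hpos : ∀ i, i < l → 0 < ν i)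
    (hanti : ∀ i j, i ≤ j → j < l → ν j ≤ ν i) :
    (Matrix.of fun i j : Fin l => hSpec ((ν i : ℤ) + (j : ℕ) - (i : ℕ))).det
      * (∏ i ∈ Finset.range l, ∏ j ∈ Finset.range (ν i),
          (1 - (X : PowerSeries ℚ) ^ (hookN l ν i j)))
    = (X : PowerSeries ℚ) ^ (∑ i ∈ Finset.range l, i * ν i) := by
  classical
  set A : Matrix (Fin l) (Fin l) (PowerSeries ℚ) :=
    Matrix.of fun i j : Fin l => hSpec ((ν i : ℤ) + (j : ℕ) - (i : ℕ)) with hA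
  set w : Fin l → PowerSeries ℚ := fun i => qq ^ (mu l ν ((Fin.rev i : Fin l) : ℕ)) with hw
  set p : Fin l → Polynomial (PowerSeries ℚ) :=
    fun j => ∏ k ∈ range (j : ℕ), (Polynomial.X - Polynomial.C (qq ^ k)) with hp
  have hmonic : ∀ j : Fin l, (p j).Monic := by
    intro j
    simp only [hp]
    exact Polynomial.monic_prod_of_monic _ _ (fun k _ => Polynomial.monic_X_sub_C _)
  have hdeg : ∀ j : Fin l, (p j).natDegree = (j : ℕ) := by
    intro j
    simp only [hp]
    rw [Polynomial.natDegree_prod_of_monic _ _ (fun k _ => Polynomial.monic_X_sub_C _)]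
    simp only [Polynomial.natDegree_X_sub_C, sum_const, smul_eq_mul, mul_one, card_range]
  have hvan : (Matrix.vandermonde w).det
      = (Matrix.of fun i j : Fin l => (p j).eval (w i)).det :=
    Matrix.det_eval_matrixOfPolynomials_eq_det_vandermonde w p hdeg hmonic
  have hAij : ∀ i j : Fin l, A (Fin.rev i) (Fin.rev j)
      = hSpec ((mu l ν ((Fin.rev i : Fin l) : ℕ) : ℤ) - (j : ℕ)) := by
    intro i j
    simp only [hA, Matrix.of_apply]
    refine congrArg hSpec ?_
    simp only [mu, Fin.val_rev]
    have hi := i.isLt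
    have hj := j.isLt
    omega
  have hsq : ∀ j : Fin l,
      ((-1 : PowerSeries ℚ) ^ (j : ℕ)) * ((-1 : PowerSeries ℚ) ^ (j : ℕ)) = 1 := by
    intro j
    rw [← pow_add]
    exact Even.neg_one_pow ⟨(j : ℕ), rfl⟩
  have hneg : ∀ i j : Fin l, (-1 : PowerSeries ℚ) ^ (j : ℕ) * (p j).eval (w i)
      = ∏ k ∈ range (j : ℕ), (qq ^ k - w i) := by
    intro i j
    have hc : ((-1 : PowerSeries ℚ)) ^ (j : ℕ)
        = ∏ _k ∈ range (j : ℕ), (-1 : PowerSeries ℚ) := by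
      rw [prod_const, card_range]
    simp only [hp, Polynomial.eval_prod, Polynomial.eval_sub, Polynomial.eval_X,
      Polynomial.eval_C]
    rw [hc, ← prod_mul_distrib]
    exact prod_congr rfl fun k _ => by ring
  have hentry : ∀ i j : Fin l, (p j).eval (w i)
      = ((-1 : PowerSeries ℚ) ^ (j : ℕ) * qq ^ (∑ k ∈ range (j : ℕ), k))
        * (phi (mu l ν ((Fin.rev i : Fin l) : ℕ)) * A (Fin.rev i) (Fin.rev j)) := by
    intro i j
    have h1 := key_entry l ν ((Fin.rev i : Fin l) : ℕ) (j : ℕ)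
    have h2 := hneg i j
    simp only [hw] at h2
    have h3 : (-1 : PowerSeries ℚ) ^ (j : ℕ) * (p j).eval (w i)
        = phi (mu l ν ((Fin.rev i : Fin l) : ℕ))
          * hSpec ((mu l ν ((Fin.rev i : Fin l) : ℕ) : ℤ) - (j : ℕ))
          * qq ^ (∑ k ∈ range (j : ℕ), k) := by
      simp only [hw]
      rw [h2]
      exact h1.symm
    rw [← hAij i j] at h3
    calc (p j).eval (w i)
        = ((-1 : PowerSeries ℚ) ^ (j : ℕ) * (-1 : PowerSeries ℚ) ^ (j : ℕ))
            * (p j).eval (w i) := by rw [hsq j, one_mul]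
      _ = (-1 : PowerSeries ℚ) ^ (j : ℕ)
            * ((-1 : PowerSeries ℚ) ^ (j : ℕ) * (p j).eval (w i)) := by ring
      _ = (-1 : PowerSeries ℚ) ^ (j : ℕ)
            * (phi (mu l ν ((Fin.rev i : Fin l) : ℕ)) * A (Fin.rev i) (Fin.rev j)
              * qq ^ (∑ k ∈ range (j : ℕ), k)) := by rw [h3]
      _ = _ := by ring
  set v : Fin l → PowerSeries ℚ :=
    fun j => (-1 : PowerSeries ℚ) ^ (j : ℕ) * qq ^ (∑ k ∈ range (j : ℕ), k) with hv
  set u : Fin l → PowerSeries ℚ := fun i => phi (mu l ν ((Fin.rev i : Fin l) : ℕ)) with hu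
  set A2 : Matrix (Fin l) (Fin l) (PowerSeries ℚ) := A.submatrix Fin.rev Fin.rev with hA2
  set N : Matrix (Fin l) (Fin l) (PowerSeries ℚ) := Matrix.of (fun i j => u i * A2 i j) with hN
  have hmat : (Matrix.of fun i j : Fin l => (p j).eval (w i))
      = Matrix.of (fun i j => v j * N i j) := by
    ext i j
    simp only [Matrix.of_apply, hN, hv, hu, hA2, Matrix.submatrix_apply]
    rw [hentry i j]
  have hdetA2 : A2.det = A.det := Matrix.det_submatrix_equiv_self Fin.revPerm A
  have hdet1 : (Matrix.of fun i j : Fin l => (p j).eval (w i)).det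
      = (∏ j : Fin l, v j) * ((∏ i : Fin l, u i) * A.det) := by
    rw [hmat, Matrix.det_mul_row v N, hN, Matrix.det_mul_column u A2, hdetA2]
  have hpair : (Matrix.vandermonde w).det
      = ∏ a ∈ range l, ∏ b ∈ Ico (a + 1) l,
          (qq ^ (mu l ν a) - qq ^ (mu l ν b)) := by
    rw [Matrix.det_vandermonde]
    have hrp := prod_rev_pairs l (fun a b => (qq ^ (mu l ν a) - qq ^ (mu l ν b) : PowerSeries ℚ))
    rw [← hrp]
  have hpair2 : (∏ a ∈ range l, ∏ b ∈ Ico (a + 1) l,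
        ((qq ^ (mu l ν a) : PowerSeries ℚ) - qq ^ (mu l ν b)))
      = ∏ a ∈ range l, ∏ b ∈ Ico (a + 1) l,
          ((-1 : PowerSeries ℚ) * (qq ^ (mu l ν b)
            * (1 - qq ^ (mu l ν a - mu l ν b)))) := by
    refine prod_congr rfl fun a ha => prod_congr rfl fun b hb => ?_
    simp only [mem_range] at ha
    simp only [Finset.mem_Ico] at hb
    have hlt := mu_anti l ν hanti (show a < b by omega) hb.2
    have hsplitpow : (qq : PowerSeries ℚ) ^ (mu l ν a)
        = qq ^ (mu l ν b) * qq ^ (mu l ν a - mu l ν b) := by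
      rw [← pow_add]; congr 1; omega
    rw [hsplitpow]; ring
  have hsplit3 : (∏ a ∈ range l, ∏ b ∈ Ico (a + 1) l,
        ((-1 : PowerSeries ℚ) * (qq ^ (mu l ν b) * (1 - qq ^ (mu l ν a - mu l ν b)))))
      = (∏ a ∈ range l, ∏ b ∈ Ico (a + 1) l, (-1 : PowerSeries ℚ))
        * ((∏ a ∈ range l, ∏ b ∈ Ico (a + 1) l, (qq ^ (mu l ν b) : PowerSeries ℚ))
          * (∏ a ∈ range l, ∏ b ∈ Ico (a + 1) l,
              (1 - qq ^ (mu l ν a - mu l ν b)))) := by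
    simp only [prod_mul_distrib]
  have hsign1 : (∏ a ∈ range l, ∏ b ∈ Ico (a + 1) l, (-1 : PowerSeries ℚ))
      = (-1 : PowerSeries ℚ) ^ (∑ k ∈ range l, k) := by
    have h1 : ∀ a ∈ range l, (∏ b ∈ Ico (a + 1) l, (-1 : PowerSeries ℚ))
        = (-1 : PowerSeries ℚ) ^ (l - 1 - a) := by
      intro a ha
      rw [prod_const, Nat.card_Ico]
      congr 1
      simp only [mem_range] at ha
      omega
    rw [prod_congr rfl h1, prod_pow_eq_pow_sum]
    congr 1
    exact sum_range_reflect (fun k => k) l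
  have hq2 : (∏ a ∈ range l, ∏ b ∈ Ico (a + 1) l, (qq ^ (mu l ν b) : PowerSeries ℚ))
      = qq ^ (∑ b ∈ range l, mu l ν b * b) := by
    have hswap : (∏ a ∈ range l, ∏ b ∈ Ico (a + 1) l, (qq ^ (mu l ν b) : PowerSeries ℚ))
        = ∏ b ∈ range l, ∏ _a ∈ range b, (qq ^ (mu l ν b) : PowerSeries ℚ) := by
      refine Finset.prod_comm' ?_
      intro x y
      simp only [mem_range, Finset.mem_Ico]
      omega
    rw [hswap]
    have h1 : ∀ b ∈ range l, (∏ _a ∈ range b, (qq ^ (mu l ν b) : PowerSeries ℚ))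
        = qq ^ (mu l ν b * b) := by
      intro b _
      rw [prod_const, card_range, ← pow_mul]
    rw [prod_congr rfl h1, prod_pow_eq_pow_sum]
  have hprodv : (∏ j : Fin l, v j)
      = (-1 : PowerSeries ℚ) ^ (∑ k ∈ range l, k)
        * qq ^ (∑ j ∈ range l, ∑ k ∈ range j, k) := by
    simp only [hv]
    rw [prod_mul_distrib]
    congr 1
    · rw [Fin.prod_univ_eq_prod_range (fun k => ((-1 : PowerSeries ℚ)) ^ k) l,
        prod_pow_eq_pow_sum]
    · rw [Fin.prod_univ_eq_prod_range (fun j => (qq : PowerSeries ℚ) ^ (∑ k ∈ range j, k)) l,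
        prod_pow_eq_pow_sum]
  have hprodu : (∏ i : Fin l, u i) = ∏ a ∈ range l, phi (mu l ν a) := by
    simp only [hu]
    have h := Equiv.prod_comp (Fin.revPerm : Equiv.Perm (Fin l))
      (fun b : Fin l => phi (mu l ν (b : ℕ)))
    simp only [Fin.revPerm_apply] at h
    rw [← Fin.prod_univ_eq_prod_range (fun a => phi (mu l ν a)) l]
    exact h
  have hL : (Matrix.vandermonde w).det
      = ((-1 : PowerSeries ℚ) ^ (∑ k ∈ range l, k)
          * qq ^ (∑ j ∈ range l, ∑ k ∈ range j, k))
        * ((∏ a ∈ range l, phi (mu l ν a)) * A.det) := by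
    rw [hvan, hdet1, hprodv, hprodu]
  have hR : (Matrix.vandermonde w).det
      = ((-1 : PowerSeries ℚ) ^ (∑ k ∈ range l, k))
        * (qq ^ (∑ b ∈ range l, mu l ν b * b)
          * (∏ a ∈ range l, ∏ b ∈ Ico (a + 1) l,
              (1 - qq ^ (mu l ν a - mu l ν b)))) := by
    rw [hpair, hpair2, hsplit3, hsign1, hq2]
  have hs : ((-1 : PowerSeries ℚ)) ^ (∑ k ∈ range l, k) ≠ 0 :=
    pow_ne_zero _ (neg_ne_zero.mpr one_ne_zero)
  have h3 : qq ^ (∑ j ∈ range l, ∑ k ∈ range j, k)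
        * ((∏ a ∈ range l, phi (mu l ν a)) * A.det)
      = qq ^ (∑ b ∈ range l, mu l ν b * b)
        * (∏ a ∈ range l, ∏ b ∈ Ico (a + 1) l,
            (1 - qq ^ (mu l ν a - mu l ν b))) := by
    refine mul_left_cancel₀ hs ?_
    linear_combination hL.symm.trans hR
  have hookP : (∏ a ∈ range l, ∏ j ∈ range (ν a), (1 - qq ^ (hookN l ν a j)))
      * (∏ a ∈ range l, ∏ b ∈ Ico (a + 1) l, (1 - qq ^ (mu l ν a - mu l ν b)))
      = ∏ a ∈ range l, phi (mu l ν a) := by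
    rw [← prod_mul_distrib]
    exact prod_congr rfl fun a ha => hook_row l ν hpos hanti a (mem_range.mp ha)
  have hE : (∑ b ∈ range l, mu l ν b * b)
      = (∑ j ∈ range l, ∑ k ∈ range j, k) + (∑ i ∈ range l, i * ν i) := by
    have h1 : ∀ b ∈ range l, mu l ν b * b = b * ν b + (l - 1 - b) * b := by
      intro b _
      have hm : mu l ν b = ν b + (l - 1 - b) := rfl
      rw [hm, add_mul, mul_comm (ν b) b]
    rw [sum_congr rfl h1, sum_add_distrib, sum_tri]
    rw [add_comm]
  have e1 : (qq : PowerSeries ℚ) ^ (∑ b ∈ range l, mu l ν b * b)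
      = qq ^ (∑ j ∈ range l, ∑ k ∈ range j, k)
        * qq ^ (∑ i ∈ range l, i * ν i) := by
    rw [← pow_add, ← hE]
  have h5 : qq ^ (∑ j ∈ range l, ∑ k ∈ range j, k)
        * ((A.det * (∏ a ∈ range l, ∏ j ∈ range (ν a), (1 - qq ^ (hookN l ν a j))))
          * (∏ a ∈ range l, phi (mu l ν a)))
      = qq ^ (∑ j ∈ range l, ∑ k ∈ range j, k)
        * (qq ^ (∑ i ∈ range l, i * ν i) * (∏ a ∈ range l, phi (mu l ν a))) := by
    linear_combination (∏ a ∈ range l, ∏ j ∈ range (ν a), (1 - qq ^ (hookN l ν a j))) * h3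
      + qq ^ (∑ b ∈ range l, mu l ν b * b) * hookP
      + (∏ a ∈ range l, phi (mu l ν a)) * e1
  have hXne : (qq : PowerSeries ℚ) ^ (∑ j ∈ range l, ∑ k ∈ range j, k) ≠ 0 :=
    pow_ne_zero _ PowerSeries.X_ne_zero
  have h7 := mul_left_cancel₀ hXne h5
  have hPne : (∏ a ∈ range l, phi (mu l ν a)) ≠ 0 :=
    Finset.prod_ne_zero_iff.mpr (fun a _ => phi_ne_zero _)
  have h8 : (∏ a ∈ range l, phi (mu l ν a))
        * (A.det * (∏ a ∈ range l, ∏ j ∈ range (ν a), (1 - qq ^ (hookN l ν a j))))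
      = (∏ a ∈ range l, phi (mu l ν a)) * (qq ^ (∑ i ∈ range l, i * ν i)) := by
    linear_combination h7
  exact mul_left_cancel₀ hPne h8
end

section
/- The cut operator C = (1/2)Σ_{i,j≥1}(i+j)pᵢpⱼ ∂/∂p_{i+j} satisfies, for all l ≥ 1 and d ≥ 1: C^{l-1} p_d = Σ_{|μ|=d, l(μ)=l} [(l-1)! · d^{l-1} / ∏ⱼ mⱼ(μ)!] · p_μ, where the sum is over partitions μ of d with exactly l parts. -/
open Finset MvPolynomial

/-- The cut operator `C F = (1/2) Σ_{i,j≥1} (i+j) pᵢ pⱼ ∂F/∂p_{i+j}` (variable `X k`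
is `p_k`).  The sum is truncated at `N`; this is exact on polynomials in the
variables `p₁, …, p_N`, on which all further terms vanish. -/
noncomputable def cutOp (N : ℕ) (F : MvPolynomial ℕ ℚ) : MvPolynomial ℕ ℚ :=
  ((1 : ℚ) / 2) • ∑ i ∈ Finset.Icc 1 N, ∑ j ∈ Finset.Icc 1 N,
    (((i + j : ℕ) : ℚ)) • (X i * X j * pderiv (i + j) F)


/-! ### Auxiliary lemmas -/

lemma prod_map_X (s : Multiset ℕ) :
    (s.map (fun k => (X k : MvPolynomial ℕ ℚ))).prod = monomial s.toFinsupp 1 := by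
  induction s using Multiset.induction with
  | empty => simp [MvPolynomial.monomial_eq]
  | cons a s ih =>
      rw [Multiset.map_cons, Multiset.prod_cons, ih, X, monomial_mul, one_mul]
      congr 1
      rw [show (a ::ₘ s) = {a} + s by simp, map_add, Multiset.toFinsupp_singleton]

noncomputable def Nfac (d : ℕ) (s : Multiset ℕ) : ℚ :=
  ∏ j ∈ Finset.range (d + 1), (Nat.factorial (s.count j) : ℚ)

lemma Nfac_pos (d : ℕ) (s : Multiset ℕ) : 0 < Nfac d s :=
  Finset.prod_pos fun j _ => by exact_mod_cast Nat.factorial_pos _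

lemma Nfac_cons (d a : ℕ) (s : Multiset ℕ) (ha : a ∈ Finset.range (d + 1)) :
    Nfac d (a ::ₘ s) = (s.count a + 1) * Nfac d s := by
  unfold Nfac
  rw [← Finset.mul_prod_erase _ _ ha, ← Finset.mul_prod_erase _ _ ha,
    Multiset.count_cons_self, Nat.factorial_succ]
  have : ∏ x ∈ (range (d+1)).erase a, ((Multiset.count x (a ::ₘ s)).factorial : ℚ) =
      ∏ x ∈ (range (d+1)).erase a, ((Multiset.count x s).factorial : ℚ) := by
    apply Finset.prod_congr rfl
    intro j hj
    rw [Multiset.count_cons_of_ne]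
    simp only [Finset.mem_erase] at hj
    exact hj.1
  rw [this]; push_cast; ring

lemma Nfac_erase (d a : ℕ) (s : Multiset ℕ) (ha : a ∈ Finset.range (d + 1)) (hm : a ∈ s) :
    Nfac d s = (s.count a) * Nfac d (s.erase a) := by
  conv_lhs => rw [← Multiset.cons_erase hm]
  rw [Nfac_cons d a _ ha, Multiset.count_erase_self]
  congr 2
  have := Multiset.count_pos.mpr hm
  have h2 : Multiset.count a s - 1 + 1 = Multiset.count a s := Nat.sub_add_cancel this
  exact_mod_cast congrArg (Nat.cast (R := ℚ)) h2

lemma parts_mem_Icc {d : ℕ} (μ : Nat.Partition d) {a : ℕ} (ha : a ∈ μ.parts) :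
    a ∈ Finset.Icc 1 d := by
  rw [Finset.mem_Icc]
  exact ⟨μ.parts_pos ha, by simpa [μ.parts_sum] using Multiset.le_sum_of_mem ha⟩

lemma sum_count_parts {d : ℕ} (μ : Nat.Partition d) :
    ∑ i ∈ Finset.Icc 1 d, μ.parts.count i = Multiset.card μ.parts :=
  Multiset.sum_count_eq_card (fun _ ha => parts_mem_Icc μ ha)

lemma sum_mul_count_parts {d : ℕ} (μ : Nat.Partition d) :
    ∑ i ∈ Finset.Icc 1 d, i * μ.parts.count i = d := by
  have h := Finset.sum_multiset_map_count μ.parts (id : ℕ → ℕ)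
  simp only [Multiset.map_id, smul_eq_mul, id_eq] at h
  have h2 : ∑ i ∈ μ.parts.toFinset, i * μ.parts.count i = μ.parts.sum := by
    rw [show ∑ i ∈ μ.parts.toFinset, i * μ.parts.count i
        = ∑ i ∈ μ.parts.toFinset, μ.parts.count i * i from
      Finset.sum_congr rfl (fun a _ => mul_comm _ _), ← h]
    simp
  calc ∑ i ∈ Finset.Icc 1 d, i * μ.parts.count i
      = ∑ i ∈ μ.parts.toFinset, i * μ.parts.count i := by
        apply (Finset.sum_subset (fun a ha => parts_mem_Icc μ (Multiset.mem_toFinset.mp ha)) _).symm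
        intro a _ ha
        have : a ∉ μ.parts := fun hh => ha (Multiset.mem_toFinset.mpr hh)
        simp [Multiset.count_eq_zero.mpr this]
    _ = d := h2.trans μ.parts_sum

lemma pderiv_smul' (k : ℕ) (c : ℚ) (F : MvPolynomial ℕ ℚ) :
    pderiv k (c • F) = c • pderiv k F := by
  have := ((pderiv (R := ℚ) (σ := ℕ) k).toLinearMap).map_smul c F
  simpa using this

lemma pderiv_sum' {ι : Type*} (k : ℕ) (s : Finset ι) (F : ι → MvPolynomial ℕ ℚ) :
    pderiv k (∑ x ∈ s, F x) = ∑ x ∈ s, pderiv k (F x) := by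
  have := map_sum ((pderiv (R := ℚ) (σ := ℕ) k).toLinearMap) F s
  simpa using this

lemma cutOp_smul (N : ℕ) (c : ℚ) (F : MvPolynomial ℕ ℚ) :
    cutOp N (c • F) = c • cutOp N F := by
  unfold cutOp
  rw [smul_comm]
  congr 1
  rw [Finset.smul_sum]
  refine Finset.sum_congr rfl fun i _ => ?_
  rw [Finset.smul_sum]
  refine Finset.sum_congr rfl fun j _ => ?_
  rw [pderiv_smul', smul_comm]
  congr 1
  rw [mul_smul_comm]

lemma cutOp_sum {ι : Type*} (N : ℕ) (s : Finset ι) (F : ι → MvPolynomial ℕ ℚ) :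
    cutOp N (∑ x ∈ s, F x) = ∑ x ∈ s, cutOp N (F x) := by
  unfold cutOp
  rw [← Finset.smul_sum]
  congr 1
  have step : ∑ i ∈ Finset.Icc 1 N, ∑ j ∈ Finset.Icc 1 N,
        (((i+j:ℕ):ℚ)) • (X i * X j * pderiv (i+j) (∑ x ∈ s, F x))
      = ∑ i ∈ Finset.Icc 1 N, ∑ x ∈ s, ∑ j ∈ Finset.Icc 1 N,
        (((i+j:ℕ):ℚ)) • (X i * X j * pderiv (i+j) (F x)) := by
    refine Finset.sum_congr rfl fun i _ => ?_
    rw [← Finset.sum_comm]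
    refine Finset.sum_congr rfl fun j _ => ?_
    rw [pderiv_sum', Finset.mul_sum, Finset.smul_sum]
  rw [step, Finset.sum_comm]

lemma finsupp_rearrange (f : ℕ →₀ ℕ) (i j : ℕ) :
    Finsupp.single i 1 + Finsupp.single j 1 + (f - Finsupp.single (i+j) 1)
      = f - Finsupp.single (i+j) 1 + Finsupp.single i 1 + Finsupp.single j 1 := by
  ext a
  simp [Finsupp.add_apply]
  omega

lemma cutOp_monomial (N : ℕ) (f : ℕ →₀ ℕ) (c : ℚ) :
    cutOp N (monomial f c) = ∑ i ∈ Finset.Icc 1 N, ∑ j ∈ Finset.Icc 1 N,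
      ((((i + j : ℕ) : ℚ) * (f (i + j) : ℕ) / 2) * c) •
        monomial (f - Finsupp.single (i+j) 1 + Finsupp.single i 1 + Finsupp.single j 1)
          (1 : ℚ) := by
  unfold cutOp
  rw [Finset.smul_sum]
  refine Finset.sum_congr rfl fun i _ => ?_
  rw [Finset.smul_sum]
  refine Finset.sum_congr rfl fun j _ => ?_
  rw [pderiv_monomial]
  rw [show (X i : MvPolynomial ℕ ℚ) = monomial (Finsupp.single i 1) 1 from rfl]
  rw [show (X j : MvPolynomial ℕ ℚ) = monomial (Finsupp.single j 1) 1 from rfl]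
  rw [monomial_mul, monomial_mul, smul_smul, smul_monomial, finsupp_rearrange,
    smul_monomial, mul_one]
  congr 1
  simp only [smul_eq_mul]
  push_cast
  ring

noncomputable def split (d i j : ℕ) (μ : Nat.Partition d) : Nat.Partition d :=
  if h : i + j ∈ μ.parts ∧ 1 ≤ i ∧ 1 ≤ j then
    { parts := i ::ₘ j ::ₘ μ.parts.erase (i + j)
      parts_pos := by
        intro a ha
        rcases Multiset.mem_cons.mp ha with rfl | ha
        · exact h.2.1
        rcases Multiset.mem_cons.mp ha with rfl | ha
        · exact h.2.2
        · exact μ.parts_pos (Multiset.mem_of_mem_erase ha)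
      parts_sum := by
        have h1 : (i + j) ::ₘ μ.parts.erase (i + j) = μ.parts := Multiset.cons_erase h.1
        have h2 : ((i+j) ::ₘ μ.parts.erase (i+j)).sum = d := by rw [h1, μ.parts_sum]
        simp only [Multiset.sum_cons] at h2 ⊢
        omega }
  else μ

noncomputable def merge (d i j : ℕ) (ν : Nat.Partition d) : Nat.Partition d :=
  if h : i ∈ ν.parts ∧ j ∈ ν.parts.erase i then
    { parts := (i + j) ::ₘ (ν.parts.erase i).erase j
      parts_pos := by
        intro a ha
        rcases Multiset.mem_cons.mp ha with rfl | ha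
        · have := ν.parts_pos h.1; omega
        · exact ν.parts_pos (Multiset.mem_of_mem_erase (Multiset.mem_of_mem_erase ha))
      parts_sum := by
        have h1 : j ::ₘ (ν.parts.erase i).erase j = ν.parts.erase i := Multiset.cons_erase h.2
        have h2 : i ::ₘ ν.parts.erase i = ν.parts := Multiset.cons_erase h.1
        have h3 : (i ::ₘ j ::ₘ (ν.parts.erase i).erase j).sum = d := by
          rw [h1, h2, ν.parts_sum]
        simp only [Multiset.sum_cons] at h3 ⊢
        omega }
  else ν

lemma split_parts {d i j : ℕ} (μ : Nat.Partition d) (h : i + j ∈ μ.parts)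
    (hi : 1 ≤ i) (hj : 1 ≤ j) :
    (split d i j μ).parts = i ::ₘ j ::ₘ μ.parts.erase (i + j) := by
  rw [split, dif_pos ⟨h, hi, hj⟩]

lemma merge_parts {d i j : ℕ} (ν : Nat.Partition d) (h1 : i ∈ ν.parts)
    (h2 : j ∈ ν.parts.erase i) :
    (merge d i j ν).parts = (i + j) ::ₘ (ν.parts.erase i).erase j := by
  rw [merge, dif_pos ⟨h1, h2⟩]

lemma toFinsupp_shift (s : Multiset ℕ) (i j k : ℕ) (hk : k ∈ s) :
    (i ::ₘ j ::ₘ s.erase k).toFinsupp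
      = s.toFinsupp - Finsupp.single k 1 + Finsupp.single i 1 + Finsupp.single j 1 := by
  ext a
  simp only [Multiset.toFinsupp_apply, Finsupp.add_apply, Finsupp.tsub_apply,
    Finsupp.single_apply, Multiset.count_cons]
  have hc := Multiset.count_pos.mpr hk
  by_cases hak : a = k
  · subst hak
    rw [Multiset.count_erase_self]
    split_ifs <;> omega
  · rw [Multiset.count_erase_of_ne hak]
    split_ifs <;> omega

lemma reindex (d l : ℕ) (c : ℚ) {i j : ℕ} (hi : i ∈ Finset.Icc 1 d) (hj : j ∈ Finset.Icc 1 d) :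
    ∑ μ ∈ Finset.univ.filter (fun μ : Nat.Partition d => Multiset.card μ.parts = l),
      (c / Nfac d μ.parts * (((i+j : ℕ):ℚ) * (μ.parts.count (i+j)) / 2)) •
        monomial (μ.parts.toFinsupp - Finsupp.single (i+j) 1
          + Finsupp.single i 1 + Finsupp.single j 1) (1:ℚ)
    = ∑ ν ∈ Finset.univ.filter (fun ν : Nat.Partition d => Multiset.card ν.parts = l+1),
      (c / Nfac d ν.parts
          * (((i+j : ℕ):ℚ) * (ν.parts.count i) * ((ν.parts.erase i).count j) / 2)) •
        monomial ν.parts.toFinsupp (1:ℚ) := by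
  obtain ⟨hi1, hid⟩ := Finset.mem_Icc.mp hi
  obtain ⟨hj1, hjd⟩ := Finset.mem_Icc.mp hj
  set k := i + j with hk
  -- restrict LHS
  rw [show (Finset.univ.filter (fun μ : Nat.Partition d => Multiset.card μ.parts = l)) =
      (Finset.univ.filter (fun μ : Nat.Partition d => Multiset.card μ.parts = l)) from rfl]
  rw [← Finset.sum_subset
    (s₁ := Finset.univ.filter
      (fun μ : Nat.Partition d => Multiset.card μ.parts = l ∧ k ∈ μ.parts))
    (by intro x hx; simp only [Finset.mem_filter] at hx ⊢; exact ⟨hx.1, hx.2.1⟩)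
    (by
      intro x hx hx2
      simp only [Finset.mem_filter, Finset.mem_univ, true_and] at hx hx2
      have : k ∉ x.parts := fun h => hx2 ⟨hx, h⟩
      rw [Multiset.count_eq_zero.mpr this]
      simp)]
  conv_rhs => rw [← Finset.sum_subset
    (s₁ := Finset.univ.filter
      (fun ν : Nat.Partition d => Multiset.card ν.parts = l + 1 ∧ i ∈ ν.parts
        ∧ j ∈ ν.parts.erase i))
    (by intro x hx; simp only [Finset.mem_filter] at hx ⊢; exact ⟨hx.1, hx.2.1⟩)
    (by
      intro x hx hx2
      simp only [Finset.mem_filter, Finset.mem_univ, true_and] at hx hx2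
      by_cases h1 : i ∈ x.parts
      · have h2 : j ∉ x.parts.erase i := fun h => hx2 ⟨hx, h1, h⟩
        rw [Multiset.count_eq_zero.mpr h2]
        simp
      · rw [Multiset.count_eq_zero.mpr h1]
        simp)]
  refine Finset.sum_nbij' (split d i j) (merge d i j) ?_ ?_ ?_ ?_ ?_
  · -- maps into target filter
    intro μ hμ
    simp only [Finset.mem_filter, Finset.mem_univ, true_and] at hμ ⊢
    obtain ⟨hcard, hkmem⟩ := hμ
    have hp := split_parts μ hkmem hi1 hj1
    refine ⟨?_, ?_, ?_⟩
    · rw [hp]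
      simp only [Multiset.card_cons, Multiset.card_erase_of_mem (show i + j ∈ μ.parts from hkmem),
        Nat.pred_eq_sub_one]
      have : 1 ≤ Multiset.card μ.parts := by
        by_contra h
        simp only [not_le, Nat.lt_one_iff, Multiset.card_eq_zero] at h
        rw [h] at hkmem; exact absurd hkmem (Multiset.notMem_zero _)
      omega
    · rw [hp]; exact Multiset.mem_cons_self _ _
    · rw [hp, Multiset.erase_cons_head]; exact Multiset.mem_cons_self _ _
  · -- inverse maps into source filter
    intro ν hν
    simp only [Finset.mem_filter, Finset.mem_univ, true_and] at hν ⊢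
    obtain ⟨hcard, h1, h2⟩ := hν
    have hp := merge_parts ν h1 h2
    constructor
    · rw [hp]
      simp only [Multiset.card_cons, Multiset.card_erase_of_mem h2,
        Multiset.card_erase_of_mem h1, Nat.pred_eq_sub_one]
      have : 2 ≤ Multiset.card ν.parts := by
        have c1 : 1 ≤ Multiset.card ν.parts := by
          by_contra h
          simp only [not_le, Nat.lt_one_iff, Multiset.card_eq_zero] at h
          rw [h] at h1; exact absurd h1 (Multiset.notMem_zero _)
        have c2 : 1 ≤ Multiset.card (ν.parts.erase i) := by
          by_contra h
          simp only [not_le, Nat.lt_one_iff, Multiset.card_eq_zero] at h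
          rw [h] at h2; exact absurd h2 (Multiset.notMem_zero _)
        have c3 : Multiset.card (ν.parts.erase i) = Multiset.card ν.parts - 1 := by
          rw [Multiset.card_erase_of_mem h1, Nat.pred_eq_sub_one]
        omega
      omega
    · rw [hp]; exact Multiset.mem_cons_self _ _
  · -- left inverse
    intro μ hμ
    simp only [Finset.mem_filter, Finset.mem_univ, true_and] at hμ
    obtain ⟨hcard, hkmem⟩ := hμ
    have hp := split_parts μ hkmem hi1 hj1
    apply Nat.Partition.ext
    have h1 : i ∈ (split d i j μ).parts := by rw [hp]; exact Multiset.mem_cons_self _ _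
    have h2 : j ∈ (split d i j μ).parts.erase i := by
      rw [hp, Multiset.erase_cons_head]; exact Multiset.mem_cons_self _ _
    rw [merge_parts _ h1 h2, hp, Multiset.erase_cons_head, Multiset.erase_cons_head]
    exact Multiset.cons_erase hkmem
  · -- right inverse
    intro ν hν
    simp only [Finset.mem_filter, Finset.mem_univ, true_and] at hν
    obtain ⟨hcard, h1, h2⟩ := hν
    have hp := merge_parts ν h1 h2
    apply Nat.Partition.ext
    have hkm : i + j ∈ (merge d i j ν).parts := by rw [hp]; exact Multiset.mem_cons_self _ _
    rw [split_parts _ hkm hi1 hj1, hp, Multiset.erase_cons_head,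
      Multiset.cons_erase h2, Multiset.cons_erase h1]
  · -- summands agree
    intro μ hμ
    simp only [Finset.mem_filter, Finset.mem_univ, true_and] at hμ
    obtain ⟨hcard, hkmem⟩ := hμ
    have hp := split_parts μ hkmem hi1 hj1
    have hkd : k ∈ Finset.range (d+1) := by
      have := parts_mem_Icc μ hkmem
      simp only [Finset.mem_Icc] at this
      simp only [Finset.mem_range]; omega
    have hid' : i ∈ Finset.range (d+1) := by simp only [Finset.mem_range]; omega
    have hjd' : j ∈ Finset.range (d+1) := by simp only [Finset.mem_range]; omega
    -- exponent equality
    have hexp : (split d i j μ).parts.toFinsupp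
        = μ.parts.toFinsupp - Finsupp.single k 1
          + Finsupp.single i 1 + Finsupp.single j 1 := by
      rw [hp]; exact toFinsupp_shift _ i j k hkmem
    rw [hexp]
    -- coefficient equality
    congr 1
    have h1 : i ∈ (split d i j μ).parts := by rw [hp]; exact Multiset.mem_cons_self _ _
    have h2 : j ∈ (split d i j μ).parts.erase i := by
      rw [hp, Multiset.erase_cons_head]; exact Multiset.mem_cons_self _ _
    set base := μ.parts.erase k with hbase
    have e1 : Nfac d μ.parts = (base.count k + 1) * Nfac d base := by
      conv_lhs => rw [← Multiset.cons_erase hkmem]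
      rw [Nfac_cons d k _ hkd]
    have e2 : (μ.parts.count k : ℚ) = (base.count k : ℚ) + 1 := by
      conv_lhs => rw [← Multiset.cons_erase hkmem]
      rw [Multiset.count_cons_self]
      push_cast; ring
    have e3 : Nfac d (split d i j μ).parts
        = ((split d i j μ).parts.count i) * (((split d i j μ).parts.erase i).count j)
            * Nfac d base := by
      rw [Nfac_erase d i _ hid' h1, Nfac_erase d j _ hjd' h2]
      rw [hp, Multiset.erase_cons_head, Multiset.erase_cons_head]
      ring
    have hb0 : (0:ℚ) < Nfac d base := Nfac_pos d base
    have hm0 : (0:ℚ) < (base.count k : ℚ) + 1 := by positivity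
    have hci : (0:ℚ) < ((split d i j μ).parts.count i : ℚ) := by
      exact_mod_cast Multiset.count_pos.mpr h1
    have hcj : (0:ℚ) < (((split d i j μ).parts.erase i).count j : ℚ) := by
      exact_mod_cast Multiset.count_pos.mpr h2
    rw [e1, e2, e3]
    field_simp

lemma count_erase_formula (s : Multiset ℕ) (i j : ℕ) :
    ((s.count i : ℚ)) * ((s.erase i).count j)
      = (s.count i : ℚ) * (s.count j) - (if i = j then (s.count i : ℚ) else 0) := by
  by_cases hij : i = j
  · subst hij
    by_cases hm : i ∈ s
    · rw [Multiset.count_erase_self, if_pos rfl]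
      have h1 : 1 ≤ s.count i := Multiset.count_pos.mpr hm
      rw [Nat.cast_sub h1]
      push_cast
      ring
    · rw [Multiset.count_eq_zero.mpr hm]
      simp
  · rw [Multiset.count_erase_of_ne (fun h => hij h.symm), if_neg hij]
    ring

lemma key_count (d l : ℕ) (ν : Nat.Partition d)
    (hcard : Multiset.card ν.parts = l + 1) :
    ∑ i ∈ Finset.Icc 1 d, ∑ j ∈ Finset.Icc 1 d,
      ((i + j : ℕ) : ℚ) * (ν.parts.count i) * ((ν.parts.erase i).count j)
    = 2 * l * d := by
  have hP : ∑ i ∈ Finset.Icc 1 d, (i : ℚ) * (ν.parts.count i) = d := by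
    exact_mod_cast congrArg (Nat.cast (R := ℚ)) (sum_mul_count_parts ν)
  have hQ : ∑ i ∈ Finset.Icc 1 d, ((ν.parts.count i : ℕ) : ℚ) = (l : ℚ) + 1 := by
    have h2 := sum_count_parts ν
    rw [hcard] at h2
    exact_mod_cast congrArg (Nat.cast (R := ℚ)) h2
  have step1 : ∀ i ∈ Finset.Icc 1 d, ∑ j ∈ Finset.Icc 1 d,
      ((i + j : ℕ) : ℚ) * (ν.parts.count i) * ((ν.parts.erase i).count j)
      = (ν.parts.count i : ℚ) * ((i : ℚ) * ((l:ℚ)+1) + d)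
        - (2 * i * ν.parts.count i) := by
    intro i hi
    have : ∀ j ∈ Finset.Icc 1 d,
        ((i + j : ℕ) : ℚ) * (ν.parts.count i) * ((ν.parts.erase i).count j)
        = (((i:ℚ) + j) * (ν.parts.count i) * (ν.parts.count j))
          - (if i = j then ((i:ℚ)+j) * (ν.parts.count i) else 0) := by
      intro j _
      push_cast
      rw [mul_assoc, count_erase_formula]
      by_cases hij : i = j
      · subst hij; simp; ring
      · simp [hij]; ring
    rw [Finset.sum_congr rfl this, Finset.sum_sub_distrib]
    congr 1
    · have expand : ∀ j ∈ Finset.Icc 1 d,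
          ((i:ℚ) + j) * (ν.parts.count i) * (ν.parts.count j)
          = (ν.parts.count i : ℚ) * ((i:ℚ) * (ν.parts.count j))
            + (ν.parts.count i : ℚ) * ((j:ℚ) * (ν.parts.count j)) := by
        intro j _; ring
      rw [Finset.sum_congr rfl expand, Finset.sum_add_distrib,
        ← Finset.mul_sum, ← Finset.mul_sum, ← Finset.mul_sum]
      rw [hQ, hP]
      ring
    · have : ∀ j ∈ Finset.Icc 1 d,
          (if i = j then ((i:ℚ)+j) * (ν.parts.count i) else 0)
          = (if i = j then ((i:ℚ)+j) * (ν.parts.count i) else 0) := fun _ _ => rfl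
      rw [Finset.sum_ite_eq _ i (fun j => ((i:ℚ)+j) * (ν.parts.count i))]
      rw [if_pos hi]
      ring
  rw [Finset.sum_congr rfl step1, Finset.sum_sub_distrib]
  have e1 : ∑ i ∈ Finset.Icc 1 d,
      (ν.parts.count i : ℚ) * ((i : ℚ) * ((l:ℚ)+1) + d)
      = ((l:ℚ)+1) * d + ((l:ℚ)+1) * d := by
    have : ∀ i ∈ Finset.Icc 1 d,
        (ν.parts.count i : ℚ) * ((i : ℚ) * ((l:ℚ)+1) + d)
        = ((l:ℚ)+1) * ((i:ℚ) * (ν.parts.count i)) + (d:ℚ) * (ν.parts.count i) := by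
      intro i _; ring
    rw [Finset.sum_congr rfl this, Finset.sum_add_distrib, ← Finset.mul_sum,
      ← Finset.mul_sum, hP, hQ]
    ring
  have e2 : ∑ i ∈ Finset.Icc 1 d, (2 * (i:ℚ) * ν.parts.count i) = 2 * d := by
    have : ∀ i ∈ Finset.Icc 1 d, (2 * (i:ℚ) * ν.parts.count i)
        = 2 * ((i:ℚ) * ν.parts.count i) := by intro i _; ring
    rw [Finset.sum_congr rfl this, ← Finset.mul_sum, hP]
  rw [e1, e2]
  ring

noncomputable def Spoly (d l : ℕ) : MvPolynomial ℕ ℚ :=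
  ∑ μ ∈ Finset.univ.filter (fun μ : Nat.Partition d => Multiset.card μ.parts = l),
    ((Nat.factorial (l-1) * d ^ (l-1) : ℚ) / Nfac d μ.parts) •
      monomial μ.parts.toFinsupp (1 : ℚ)

def singlePart (d : ℕ) (hd : 1 ≤ d) : Nat.Partition d :=
  ⟨{d}, by intro i hi; rw [Multiset.mem_singleton] at hi; omega, by simp⟩

lemma Spoly_one (d : ℕ) (hd : 1 ≤ d) : Spoly d 1 = X d := by
  unfold Spoly
  have hfilter : Finset.univ.filter
      (fun μ : Nat.Partition d => Multiset.card μ.parts = 1) = {singlePart d hd} := by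
    ext μ
    simp only [Finset.mem_filter, Finset.mem_univ, true_and, Finset.mem_singleton]
    constructor
    · intro h
      obtain ⟨a, ha⟩ := Multiset.card_eq_one.mp h
      have : a = d := by
        have := μ.parts_sum
        rw [ha] at this
        simpa using this
      subst this
      apply Nat.Partition.ext
      rw [ha]; rfl
    · intro h; rw [h]; rfl
  rw [hfilter, Finset.sum_singleton]
  have hN : Nfac d (singlePart d hd).parts = 1 := by
    unfold Nfac
    apply Finset.prod_eq_one
    intro j _
    show ((Multiset.count j {d}).factorial : ℚ) = 1
    rw [Multiset.count_singleton]
    split_ifs <;> simp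
  rw [hN]
  norm_num
  show monomial (Multiset.toFinsupp {d}) (1:ℚ) = X d
  rw [Multiset.toFinsupp_singleton]
  rfl

lemma Spoly_step (d l : ℕ) (hd : 1 ≤ d) (hl : 1 ≤ l) :
    cutOp d (Spoly d l) = Spoly d (l + 1) := by
  set c : ℚ := (Nat.factorial (l-1) * d ^ (l-1) : ℚ) with hc
  unfold Spoly
  rw [cutOp_sum]
  have e1 : ∀ μ ∈ Finset.univ.filter
      (fun μ : Nat.Partition d => Multiset.card μ.parts = l),
      cutOp d ((c / Nfac d μ.parts) • monomial μ.parts.toFinsupp (1:ℚ))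
      = ∑ i ∈ Finset.Icc 1 d, ∑ j ∈ Finset.Icc 1 d,
          (c / Nfac d μ.parts * (((i+j : ℕ):ℚ) * (μ.parts.count (i+j)) / 2)) •
            monomial (μ.parts.toFinsupp - Finsupp.single (i+j) 1
              + Finsupp.single i 1 + Finsupp.single j 1) (1:ℚ) := by
    intro μ _
    rw [cutOp_smul, cutOp_monomial, Finset.smul_sum]
    refine Finset.sum_congr rfl fun i _ => ?_
    rw [Finset.smul_sum]
    refine Finset.sum_congr rfl fun j _ => ?_
    rw [smul_smul]
    congr 1
    rw [Multiset.toFinsupp_apply]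
    ring
  rw [Finset.sum_congr rfl e1]
  -- swap sums: μ, i, j → i, j, μ
  rw [Finset.sum_comm]
  have e2 : ∀ i ∈ Finset.Icc 1 d,
      ∑ μ ∈ Finset.univ.filter
        (fun μ : Nat.Partition d => Multiset.card μ.parts = l),
        ∑ j ∈ Finset.Icc 1 d,
          (c / Nfac d μ.parts * (((i+j : ℕ):ℚ) * (μ.parts.count (i+j)) / 2)) •
            monomial (μ.parts.toFinsupp - Finsupp.single (i+j) 1
              + Finsupp.single i 1 + Finsupp.single j 1) (1:ℚ)
      = ∑ j ∈ Finset.Icc 1 d,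
          ∑ ν ∈ Finset.univ.filter
            (fun ν : Nat.Partition d => Multiset.card ν.parts = l+1),
          (c / Nfac d ν.parts
              * (((i+j : ℕ):ℚ) * (ν.parts.count i) * ((ν.parts.erase i).count j) / 2)) •
            monomial ν.parts.toFinsupp (1:ℚ) := by
    intro i hi
    rw [Finset.sum_comm]
    refine Finset.sum_congr rfl fun j hj => ?_
    exact reindex d l c hi hj
  rw [Finset.sum_congr rfl e2]
  -- swap back: i, j, ν → ν, i, j
  have e3 : ∀ i ∈ Finset.Icc 1 d,
      ∑ j ∈ Finset.Icc 1 d,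
          ∑ ν ∈ Finset.univ.filter
            (fun ν : Nat.Partition d => Multiset.card ν.parts = l+1),
          (c / Nfac d ν.parts
              * (((i+j : ℕ):ℚ) * (ν.parts.count i) * ((ν.parts.erase i).count j) / 2)) •
            monomial ν.parts.toFinsupp (1:ℚ)
      = ∑ ν ∈ Finset.univ.filter
            (fun ν : Nat.Partition d => Multiset.card ν.parts = l+1),
          ∑ j ∈ Finset.Icc 1 d,
          (c / Nfac d ν.parts
              * (((i+j : ℕ):ℚ) * (ν.parts.count i) * ((ν.parts.erase i).count j) / 2)) •
            monomial ν.parts.toFinsupp (1:ℚ) := fun i _ => Finset.sum_comm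
  rw [Finset.sum_congr rfl e3, Finset.sum_comm]
  refine Finset.sum_congr rfl fun ν hν => ?_
  simp only [Finset.mem_filter, Finset.mem_univ, true_and] at hν
  -- pull scalars out
  have e4 : ∀ i ∈ Finset.Icc 1 d, ∑ j ∈ Finset.Icc 1 d,
      (c / Nfac d ν.parts
          * (((i+j : ℕ):ℚ) * (ν.parts.count i) * ((ν.parts.erase i).count j) / 2)) •
        monomial ν.parts.toFinsupp (1:ℚ)
      = (∑ j ∈ Finset.Icc 1 d, c / Nfac d ν.parts
          * (((i+j : ℕ):ℚ) * (ν.parts.count i) * ((ν.parts.erase i).count j) / 2)) •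
        monomial ν.parts.toFinsupp (1:ℚ) := fun i _ => (Finset.sum_smul).symm
  rw [Finset.sum_congr rfl e4, ← Finset.sum_smul]
  congr 1
  have e5 : ∀ i ∈ Finset.Icc 1 d, ∑ j ∈ Finset.Icc 1 d,
      c / Nfac d ν.parts
        * (((i+j : ℕ):ℚ) * (ν.parts.count i) * ((ν.parts.erase i).count j) / 2)
      = c / Nfac d ν.parts / 2 * ∑ j ∈ Finset.Icc 1 d,
          ((i+j : ℕ):ℚ) * (ν.parts.count i) * ((ν.parts.erase i).count j) := by
    intro i _
    rw [Finset.mul_sum]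
    exact Finset.sum_congr rfl fun j _ => by ring
  rw [Finset.sum_congr rfl e5, ← Finset.mul_sum, key_count d l ν hν]
  have hl1 : l - 1 + 1 = l := Nat.sub_add_cancel hl
  have hfac : (Nat.factorial l : ℚ) = l * Nat.factorial (l-1) := by
    conv_lhs => rw [← hl1]
    rw [Nat.factorial_succ]
    push_cast [hl1]
    ring
  have hpow : (d : ℚ) ^ l = d ^ (l-1) * d := by
    conv_lhs => rw [← hl1]
    rw [pow_succ]
  rw [hc]
  simp only [Nat.add_sub_cancel]
  rw [hfac]
  push_cast [hpow]
  ring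

/-- `C^{l-1} p_d = Σ_{|μ|=d, l(μ)=l} [(l-1)! d^{l-1} / ∏ⱼ mⱼ(μ)!] p_μ`, the sum being
over partitions `μ` of `d` with exactly `l` parts. -/
theorem cut_operator_power (d l : ℕ) (hd : 1 ≤ d) (hl : 1 ≤ l) :
    (cutOp d)^[l - 1] (X d)
      = ∑ μ ∈ Finset.univ.filter
          (fun μ : Nat.Partition d => Multiset.card μ.parts = l),
          ((Nat.factorial (l - 1) * d ^ (l - 1) : ℚ)
              / ∏ j ∈ Finset.range (d + 1),
                  (Nat.factorial (μ.parts.count j) : ℚ)) •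
            (μ.parts.map (fun k => (X k : MvPolynomial ℕ ℚ))).prod := by
  have key : ∀ n : ℕ, (cutOp d)^[n] (X d) = Spoly d (n+1) := by
    intro n
    induction n with
    | zero => simpa using (Spoly_one d hd).symm
    | succ n ih =>
        rw [Function.iterate_succ_apply', ih, Spoly_step d (n+1) hd (by omega)]
  obtain ⟨n, rfl⟩ : ∃ n, l = n + 1 := ⟨l - 1, (Nat.sub_add_cancel hl).symm⟩
  simp only [Nat.add_sub_cancel]
  rw [key n]
  unfold Spoly Nfac
  simp only [Nat.add_sub_cancel]
  refine Finset.sum_congr rfl fun μ _ => ?_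
  rw [prod_map_X]
end
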